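/- If S = f(X) is a sufficient statistic for Y and T = g(X) is any other sufficient statistic such that S = h(T) for some function h, then I[S;X] ≤ I[T;X]; in particular the causal-state statistic minimizes I[·;X] among all sufficient statistics. -/
import Mathlib


open scoped Classical BigOperators

/-- Probability of an event under weights `P` on a finite sample space. -/
noncomputable def pr {Ω : Type} [Fintype Ω] (P : Ω → ℝ) (E : Ω → Prop) : ℝ :=
  ∑ ω, if E ω then P ω else 0

/-- Conditional probability `P(E | F)`. -/
noncomputable def cpr {Ω : Type} [Fintype Ω] (P : Ω → ℝ) (E F : Ω → Prop) : ℝ :=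
  pr P (fun ω => E ω ∧ F ω) / pr P F

/-- Shannon mutual information (base 2), with the convention `0 log 0 = 0`. -/
noncomputable def mi {Ω A B : Type} [Fintype Ω] [Fintype A] [Fintype B]
    (P : Ω → ℝ) (X : Ω → A) (Y : Ω → B) : ℝ :=
  ∑ a, ∑ b,
    (if pr P (fun ω => X ω = a ∧ Y ω = b) = 0 then 0 else
      pr P (fun ω => X ω = a ∧ Y ω = b) *
        Real.logb 2 (pr P (fun ω => X ω = a ∧ Y ω = b) /
          (pr P (fun ω => X ω = a) * pr P (fun ω => Y ω = b))))

/-- Conditional mutual information `I[X;Y|Z]` (base 2), convention `0 log 0 = 0`. -/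
noncomputable def cmi {Ω A B C : Type} [Fintype Ω] [Fintype A] [Fintype B] [Fintype C]
    (P : Ω → ℝ) (X : Ω → A) (Y : Ω → B) (Z : Ω → C) : ℝ :=
  ∑ c, ∑ a, ∑ b,
    (if pr P (fun ω => X ω = a ∧ Y ω = b ∧ Z ω = c) = 0 then 0 else
      pr P (fun ω => X ω = a ∧ Y ω = b ∧ Z ω = c) *
        Real.logb 2 ((pr P (fun ω => X ω = a ∧ Y ω = b ∧ Z ω = c) *
            pr P (fun ω => Z ω = c)) /
          (pr P (fun ω => X ω = a ∧ Z ω = c) * pr P (fun ω => Y ω = b ∧ Z ω = c))))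

/-- Conditional independence `X ⫫ Y | Z`: the conditional joint factorizes for
every conditioning value of positive probability. -/
def CondIndep {Ω A B C : Type} [Fintype Ω]
    (P : Ω → ℝ) (X : Ω → A) (Y : Ω → B) (Z : Ω → C) : Prop :=
  ∀ (a : A) (b : B) (c : C), 0 < pr P (fun ω => Z ω = c) →
    cpr P (fun ω => X ω = a ∧ Y ω = b) (fun ω => Z ω = c) =
      cpr P (fun ω => X ω = a) (fun ω => Z ω = c) *
        cpr P (fun ω => Y ω = b) (fun ω => Z ω = c)

/-- The causal-state statistic: `eps P X Y x` is the conditional distribution of `Y`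
given `X = x`; two values of `X` are equivalent iff their `eps`-values coincide. -/
noncomputable def eps {Ω A B : Type} [Fintype Ω]
    (P : Ω → ℝ) (X : Ω → A) (Y : Ω → B) (x : A) : B → ℝ :=
  fun y => cpr P (fun ω => Y ω = y) (fun ω => X ω = x)


lemma pr_nonneg' {Ω : Type} [Fintype Ω] (P : Ω → ℝ) (hP : ∀ ω, 0 ≤ P ω)
    (E : Ω → Prop) : 0 ≤ pr P E := by
  apply Finset.sum_nonneg
  intro ω _
  split <;> simp [hP ω]

lemma pr_congr' {Ω : Type} [Fintype Ω] (P : Ω → ℝ) {E F : Ω → Prop}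
    (hEF : ∀ ω, E ω ↔ F ω) : pr P E = pr P F := by
  unfold pr
  exact Finset.sum_congr rfl (fun ω _ => by rw [hEF ω])

lemma pr_mono' {Ω : Type} [Fintype Ω] (P : Ω → ℝ) (hP : ∀ ω, 0 ≤ P ω)
    {E F : Ω → Prop} (hEF : ∀ ω, E ω → F ω) : pr P E ≤ pr P F := by
  apply Finset.sum_le_sum
  intro ω _
  by_cases hE : E ω
  · rw [if_pos hE, if_pos (hEF ω hE)]
  · rw [if_neg hE]
    split <;> simp [hP ω]

lemma mi_fun_eq {Ω A C : Type} [Fintype Ω] [Fintype A] [Fintype C]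
    (P : Ω → ℝ) (X : Ω → A) (k : A → C) :
    mi P (fun ω => k (X ω)) X =
      ∑ a, (if pr P (fun ω => X ω = a) = 0 then 0 else
        pr P (fun ω => X ω = a) *
          Real.logb 2 (pr P (fun ω => X ω = a) /
            (pr P (fun ω => k (X ω) = k a) * pr P (fun ω => X ω = a)))) := by
  unfold mi
  rw [Finset.sum_comm]
  apply Finset.sum_congr rfl
  intro a _
  rw [Fintype.sum_eq_single (k a)]
  · have hjoint : pr P (fun ω => k (X ω) = k a ∧ X ω = a) = pr P (fun ω => X ω = a) :=
      pr_congr' P (fun ω => ⟨fun hh => hh.2, fun hh => ⟨by rw [hh], hh⟩⟩)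
    rw [hjoint]
  · intro c hc
    have hzero : pr P (fun ω => k (X ω) = c ∧ X ω = a) = 0 := by
      unfold pr
      apply Finset.sum_eq_zero
      intro ω _
      rw [if_neg]
      rintro ⟨h1, h2⟩
      exact hc (by rw [← h1, h2])
    rw [if_pos hzero]


/-- Minimal complexity: if the sufficient statistic `S = f(X)` is a function of
another sufficient statistic `T = g(X)`, then `I[S;X] ≤ I[T;X]`. -/
theorem statistical_complexity_minimal {Ω A B C D : Type}
    [Fintype Ω] [Fintype A] [Fintype B] [Fintype C] [Fintype D]
    (P : Ω → ℝ) (hP : ∀ ω, 0 ≤ P ω) (hPsum : ∑ ω, P ω = 1)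
    (X : Ω → A) (Y : Ω → B) (f : A → C) (g : A → D) (h : D → C)
    (hsuff_f : ∀ (x : A) (y : B), 0 < pr P (fun ω => X ω = x) →
      cpr P (fun ω => Y ω = y) (fun ω => X ω = x) =
        cpr P (fun ω => Y ω = y) (fun ω => f (X ω) = f x))
    (hsuff_g : ∀ (x : A) (y : B), 0 < pr P (fun ω => X ω = x) →
      cpr P (fun ω => Y ω = y) (fun ω => X ω = x) =
        cpr P (fun ω => Y ω = y) (fun ω => g (X ω) = g x))
    (hfg : ∀ x : A, f x = h (g x)) :
    mi P (fun ω => f (X ω)) X ≤ mi P (fun ω => g (X ω)) X := by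
  rw [mi_fun_eq, mi_fun_eq]
  apply Finset.sum_le_sum
  intro a _
  by_cases hpa : pr P (fun ω => X ω = a) = 0
  · simp [hpa]
  · rw [if_neg hpa, if_neg hpa]
    have hpa' : 0 < pr P (fun ω => X ω = a) :=
      lt_of_le_of_ne (pr_nonneg' P hP _) (Ne.symm hpa)
    have hg : pr P (fun ω => X ω = a) ≤ pr P (fun ω => g (X ω) = g a) :=
      pr_mono' P hP (fun ω hh => by rw [hh])
    have hgf : pr P (fun ω => g (X ω) = g a) ≤ pr P (fun ω => f (X ω) = f a) :=
      pr_mono' P hP (fun ω hh => by rw [hfg (X ω), hh, ← hfg a])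
    have hgpos : 0 < pr P (fun ω => g (X ω) = g a) := lt_of_lt_of_le hpa' hg
    have hfpos : 0 < pr P (fun ω => f (X ω) = f a) := lt_of_lt_of_le hgpos hgf
    apply mul_le_mul_of_nonneg_left _ (le_of_lt hpa')
    apply Real.logb_le_logb_of_le (by norm_num : (1:ℝ) < 2)
    · positivity
    · apply div_le_div_of_nonneg_left (le_of_lt hpa') (by positivity)
      exact mul_le_mul_of_nonneg_right hgf (le_of_lt hpa')
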